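/- (Local optimism under coupled perturbations, core of Lemma F.1) Let θ*, θ̂ ∈ ℝ^d, Φ*, Φ̂ ∈ ℝ^{m×d}, α ∈ ℝ^m, let V be a positive-definite d×d matrix, ω ≥ 0, and let a* ∈ ℝ^d satisfy Φ*a* ≤ α. Assume consistency: ‖θ̂ − θ*‖_V ≤ ω and ‖Φ̂ⁱ − Φ*ⁱ‖_V ≤ ω for every row i. Let ν be a probability law on ℝ^d such that for every u ∈ ℝ^d, ν({ζ : ζᵀu ≥ ‖u‖}) ≥ p, for some p ∈ (0,1]. Define, for ζ ∈ ℝ^d, θ̃(ζ)ᵀ := θ̂ᵀ + ω·ζᵀV^{-1/2} and Φ̃(ζ) := Φ̂ − 1_m·(ω·ζᵀV^{-1/2}). Then ν({ ζ : θ̃(ζ)ᵀa* ≥ θ*ᵀa* and Φ̃(ζ)a* ≤ α }) ≥ p. -/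

import Mathlib

/-!
Put `u := V^{-1/2} a*`. Cauchy–Schwarz in the `V`-geometry gives `x ⬝ a* ≤ ‖x‖_V ‖u‖` for every
`x`, so every estimation error in the direction `a*` is at most `ω ‖u‖`. The single perturbation
`ω ζᵀ V^{-1/2}` moves `θ̂ᵀa*` up and every `Φ̂ⁱ a*` down by `ω ζᵀu`, which is at least `ω ‖u‖` on
the event `{ζ : ζᵀu ≥ ‖u‖}` of probability at least `p`. On that event `θ̃` is optimistic and
`a*` stays feasible for `Φ̃`.
-/

open MeasureTheory
open scoped Matrix

/-- Euclidean norm of a vector in `Fin n → ℝ`. -/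
noncomputable def vnorm {n : ℕ} (v : Fin n → ℝ) : ℝ := Real.sqrt (∑ i, v i ^ 2)

/-- Weighted norm `‖v‖_M = ‖M^{1/2} v‖ = √(vᵀ M v)` for a positive-semidefinite matrix `M`. -/
noncomputable def wnorm {d : ℕ} (M : Matrix (Fin d) (Fin d) ℝ) (v : Fin d → ℝ) : ℝ :=
  Real.sqrt (v ⬝ᵥ M.mulVec v)

lemma vnorm_eq_sqrt_dotProduct_self {n : ℕ} (v : Fin n → ℝ) : vnorm v = Real.sqrt (v ⬝ᵥ v) := by
  simp only [vnorm, dotProduct, sq]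

lemma dotProduct_le_vnorm_mul_vnorm {n : ℕ} (u v : Fin n → ℝ) : u ⬝ᵥ v ≤ vnorm u * vnorm v :=
  Real.sum_mul_le_sqrt_mul_sqrt _ u v

lemma wnorm_neg {d : ℕ} (M : Matrix (Fin d) (Fin d) ℝ) (v : Fin d → ℝ) :
    wnorm M (-v) = wnorm M v := by
  simp only [wnorm, Matrix.mulVec_neg, dotProduct_neg, neg_dotProduct, neg_neg]

lemma wnorm_sub_comm {d : ℕ} (M : Matrix (Fin d) (Fin d) ℝ) (u v : Fin d → ℝ) :
    wnorm M (u - v) = wnorm M (v - u) := by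
  rw [← neg_sub, wnorm_neg]

lemma Matrix.IsSymm.mulVec_dotProduct_mulVec {n R : Type*} [Fintype n] [CommSemiring R]
    {S : Matrix n n R} (hS : S.IsSymm) (u w : n → R) :
    (S *ᵥ u) ⬝ᵥ (S *ᵥ w) = u ⬝ᵥ (S * S) *ᵥ w := by
  rw [Matrix.dotProduct_mulVec, ← Matrix.vecMul_transpose, hS.eq, Matrix.vecMul_vecMul,
    ← Matrix.dotProduct_mulVec]

section InverseSquareRoot

variable {d : ℕ} {V S : Matrix (Fin d) (Fin d) ℝ}

lemma vnorm_mulVec_mulVec_eq_wnorm (hVdet : IsUnit V.det) (hS : S.IsSymm) (hSsq : S * S = V⁻¹)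
    (x : Fin d → ℝ) : vnorm (S *ᵥ V *ᵥ x) = wnorm V x := by
  rw [vnorm_eq_sqrt_dotProduct_self, hS.mulVec_dotProduct_mulVec, hSsq, Matrix.mulVec_mulVec,
    Matrix.nonsing_inv_mul _ hVdet, Matrix.one_mulVec, dotProduct_comm, wnorm]

lemma dotProduct_eq_mulVec_dotProduct_mulVec (hVdet : IsUnit V.det) (hS : S.IsSymm)
    (hSsq : S * S = V⁻¹) (x a : Fin d → ℝ) : x ⬝ᵥ a = (S *ᵥ V *ᵥ x) ⬝ᵥ (S *ᵥ a) := by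
  rw [dotProduct_comm (S *ᵥ _), hS.mulVec_dotProduct_mulVec, hSsq, Matrix.mulVec_mulVec,
    Matrix.nonsing_inv_mul _ hVdet, Matrix.one_mulVec, dotProduct_comm]

lemma dotProduct_le_wnorm_mul_vnorm (hVdet : IsUnit V.det) (hS : S.IsSymm) (hSsq : S * S = V⁻¹)
    (x a : Fin d → ℝ) : x ⬝ᵥ a ≤ wnorm V x * vnorm (S *ᵥ a) := by
  rw [dotProduct_eq_mulVec_dotProduct_mulVec hVdet hS hSsq,
    ← vnorm_mulVec_mulVec_eq_wnorm hVdet hS hSsq]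
  exact dotProduct_le_vnorm_mul_vnorm _ _

lemma dotProduct_le_add_of_wnorm_sub_le (hVdet : IsUnit V.det) (hS : S.IsSymm)
    (hSsq : S * S = V⁻¹) {ω : ℝ} (hω : 0 ≤ ω) {x y a ζ : Fin d → ℝ}
    (hxy : wnorm V (x - y) ≤ ω) (hζ : vnorm (S *ᵥ a) ≤ ζ ⬝ᵥ S *ᵥ a) :
    x ⬝ᵥ a ≤ y ⬝ᵥ a + ω * (ζ ⬝ᵥ S *ᵥ a) := by
  have herr : (x - y) ⬝ᵥ a ≤ ω * vnorm (S *ᵥ a) :=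
    (dotProduct_le_wnorm_mul_vnorm hVdet hS hSsq _ _).trans
      (mul_le_mul_of_nonneg_right hxy (Real.sqrt_nonneg _))
  have hpert : ω * vnorm (S *ᵥ a) ≤ ω * (ζ ⬝ᵥ S *ᵥ a) := mul_le_mul_of_nonneg_left hζ hω
  rw [sub_dotProduct] at herr
  linarith

end InverseSquareRoot

theorem local_optimism_coupled_general (d m : ℕ)
    (θs θh : Fin d → ℝ) (Φs Φh : Fin m → Fin d → ℝ) (α : Fin m → ℝ)
    (V : Matrix (Fin d) (Fin d) ℝ) (hV : V.PosDef)
    (S : Matrix (Fin d) (Fin d) ℝ) (hSpsd : S.PosSemidef) (hSsq : S * S = V⁻¹)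
    (ω : ℝ) (hω : 0 ≤ ω)
    (astar : Fin d → ℝ) (hfeas : ∀ i, Φs i ⬝ᵥ astar ≤ α i)
    (hθcon : wnorm V (fun j => θh j - θs j) ≤ ω)
    (hΦcon : ∀ i, wnorm V (fun j => Φh i j - Φs i j) ≤ ω)
    (p : ℝ)
    (ν : Measure (Fin d → ℝ))
    (hanti : ∀ u : Fin d → ℝ, ENNReal.ofReal p ≤ ν {ζ | vnorm u ≤ ζ ⬝ᵥ u}) :
    ENNReal.ofReal p
      ≤ ν {ζ | θs ⬝ᵥ astar ≤ (fun j => θh j + ω * (ζ ᵥ* S) j) ⬝ᵥ astar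
          ∧ ∀ i, (fun j => Φh i j - ω * (ζ ᵥ* S) j) ⬝ᵥ astar ≤ α i} := by
  have hVdet : IsUnit V.det := isUnit_iff_ne_zero.2 hV.det_pos.ne'
  have hS : S.IsSymm := Matrix.isHermitian_iff_isSymm.1 hSpsd.1
  refine (hanti (S *ᵥ astar)).trans (measure_mono fun ζ hζ => ?_)
  have hshift : (ζ ᵥ* S) ⬝ᵥ astar = ζ ⬝ᵥ S *ᵥ astar := (Matrix.dotProduct_mulVec _ _ _).symm
  refine ⟨?_, fun i => ?_⟩
  · have hθ : wnorm V (θs - θh) ≤ ω := by rw [wnorm_sub_comm]; exact hθcon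
    have := dotProduct_le_add_of_wnorm_sub_le hVdet hS hSsq hω hθ hζ
    change θs ⬝ᵥ astar ≤ (θh + ω • (ζ ᵥ* S)) ⬝ᵥ astar
    rw [add_dotProduct, smul_dotProduct, hshift, smul_eq_mul]
    exact this
  · have := dotProduct_le_add_of_wnorm_sub_le hVdet hS hSsq hω (hΦcon i) hζ
    change (Φh i - ω • (ζ ᵥ* S)) ⬝ᵥ astar ≤ α i
    rw [sub_dotProduct, smul_dotProduct, hshift, smul_eq_mul]
    linarith [hfeas i]

/-- **Local optimism under coupled perturbations (core of Lemma F.1).** Let `a*` be feasible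
(`Φ*a* ≤ α`), assume consistency of the estimates `(θ̂, Φ̂)` at radius `ω` in the `V`-norm,
and let `ν` be a law on `ℝ^d` with anticoncentration constant `p`. Writing `S = V^{-1/2}`
(a positive-semidefinite square root of `V⁻¹`), and defining the coupled perturbations
`θ̃(ζ) := θ̂ + ω·Sζ` and `Φ̃(ζ) := Φ̂ − 1_m(ωζᵀS)` (each row of `Φ̂` shifted by `−ωζᵀV^{-1/2}`),
the event `{ζ : θ̃(ζ)ᵀa* ≥ θ*ᵀa* and Φ̃(ζ)a* ≤ α}` has `ν`-probability at least `p`. -/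
theorem local_optimism_coupled (d m : ℕ)
    (θs θh : Fin d → ℝ) (Φs Φh : Fin m → Fin d → ℝ) (α : Fin m → ℝ)
    (V : Matrix (Fin d) (Fin d) ℝ) (hV : V.PosDef)
    (S : Matrix (Fin d) (Fin d) ℝ) (hSpsd : S.PosSemidef) (hSsq : S * S = V⁻¹)
    (ω : ℝ) (hω : 0 ≤ ω)
    (astar : Fin d → ℝ) (hfeas : ∀ i, Φs i ⬝ᵥ astar ≤ α i)
    (hθcon : wnorm V (fun j => θh j - θs j) ≤ ω)
    (hΦcon : ∀ i, wnorm V (fun j => Φh i j - Φs i j) ≤ ω)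
    (p : ℝ) (hp : p ∈ Set.Ioc (0 : ℝ) 1)
    (ν : Measure (Fin d → ℝ)) [IsProbabilityMeasure ν]
    (hanti : ∀ u : Fin d → ℝ, ENNReal.ofReal p ≤ ν {ζ | vnorm u ≤ ζ ⬝ᵥ u}) :
    ENNReal.ofReal p
      ≤ ν {ζ | θs ⬝ᵥ astar ≤ (fun j => θh j + ω * (ζ ᵥ* S) j) ⬝ᵥ astar
          ∧ ∀ i, (fun j => Φh i j - ω * (ζ ᵥ* S) j) ⬝ᵥ astar ≤ α i} :=
  local_optimism_coupled_general d m θs θh Φs Φh α V hV S hSpsd hSsq ω hω astar hfeas hθcon hΦcon p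
    ν hanti
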